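/- arXiv:1905.05468 — 2 statements merged into one kernel-verified Lean document; each statement's English description precedes it below -/
import Mathlib

section
/- Let A ∈ ℝ^{S×S} be symmetric with spectral decomposition A = E Λ Eᵀ where E is orthogonal and the eigenvalues along the diagonal of Λ are in ascending order. If K ≤ S, then the matrix Q* consisting of the first K columns of E minimizes Q ↦ tr(Qᵀ A Q) over all Q ∈ ℝ^{S×K} with QᵀQ = I_K, and the minimum value equals the sum of the K smallest eigenvalues of A. -/
/-!
Conjugating by `E` turns `tr (Qᵀ A Q)` into `∑ i, d i * w i`, where `w i` is the squared norm
of the `i`-th row of `P = Eᵀ Q`. Since `P` has orthonormal columns, `P Pᵀ` is an orthogonal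
projection of rank `K`, so the weights satisfy `0 ≤ w i ≤ 1` and `∑ i, w i = K`. Among such
weights `∑ i, d i * w i` is smallest when the whole mass sits on the `K` smallest `d i`, which is
exactly the weight vector of `Q*`.
-/

open Matrix BigOperators

section Weights

variable {ι : Type*} [Fintype ι]

theorem exists_separating_of_forall_mem_le {s : Finset ι} {d : ι → ℝ}
    (hd : ∀ i ∈ s, ∀ j ∉ s, d i ≤ d j) :
    ∃ c, (∀ i ∈ s, d i ≤ c) ∧ ∀ j ∉ s, c ≤ d j := by
  rcases s.eq_empty_or_nonempty with rfl | hs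
  · obtain ⟨c, hc⟩ := (Set.finite_range d).bddBelow
    exact ⟨c, by simp, fun j _ => hc ⟨j, rfl⟩⟩
  · refine ⟨s.sup' hs d, fun i hi => s.le_sup' d hi, fun j hj => ?_⟩
    exact Finset.sup'_le hs d fun i hi => hd i hi j hj

theorem sum_le_sum_mul_of_sum_eq_card {s : Finset ι} {d t : ι → ℝ}
    (hd : ∀ i ∈ s, ∀ j ∉ s, d i ≤ d j)
    (ht₀ : ∀ i, 0 ≤ t i) (ht₁ : ∀ i, t i ≤ 1) (hsum : ∑ i, t i = s.card) :
    ∑ i ∈ s, d i ≤ ∑ i, d i * t i := by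
  classical
  obtain ⟨c, hcs, hcs'⟩ := exists_separating_of_forall_mem_le hd
  -- On `s` both factors are `≤ 0`, off `s` both are `≥ 0`; the `c`-terms cancel as `∑ t = #s`.
  have hterm : ∀ i, 0 ≤ (d i - c) * (t i - if i ∈ s then 1 else 0) := by
    intro i
    split_ifs with hi
    · exact mul_nonneg_of_nonpos_of_nonpos (by linarith [hcs i hi]) (by linarith [ht₁ i])
    · exact mul_nonneg (by linarith [hcs' i hi]) (by linarith [ht₀ i])
  have hexpand : ∑ i, (d i - c) * (t i - if i ∈ s then 1 else 0)
      = ∑ i, d i * t i - ∑ i ∈ s, d i := by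
    simp only [mul_sub, sub_mul, Finset.sum_sub_distrib, mul_ite, mul_one, mul_zero,
      Finset.sum_ite_mem, Finset.univ_inter, ← Finset.mul_sum, hsum, Finset.sum_const,
      nsmul_eq_mul]
    ring
  linarith [Finset.sum_nonneg fun i (_ : i ∈ Finset.univ) => hterm i]

end Weights

theorem Fin.castLE_le_of_forall_ne {K S : ℕ} (hK : K ≤ S) {i : Fin K} {j : Fin S}
    (hj : ∀ a : Fin K, Fin.castLE hK a ≠ j) : Fin.castLE hK i ≤ j := by
  by_contra! h
  exact hj ⟨j, (Fin.lt_def.mp h).trans i.isLt⟩ rfl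

namespace Matrix

variable {l m n : Type*} [Fintype m]

theorem trace_transpose_mul_diagonal_mul [Fintype n] {R : Type*} [CommSemiring R]
    [DecidableEq m] (P : Matrix m n R) (d : m → R) :
    (Pᵀ * diagonal d * P).trace = ∑ i, d i * ∑ j, P i j ^ 2 := by
  simp only [trace, diag, mul_apply, transpose_apply, diagonal_apply, mul_ite, mul_zero,
    Finset.sum_ite_eq', Finset.mem_univ, if_true, Finset.mul_sum]
  rw [Finset.sum_comm]
  exact Finset.sum_congr rfl fun i _ => Finset.sum_congr rfl fun j _ => by ring

theorem sum_sum_sq_eq_card_of_transpose_mul_self [Fintype n] {R : Type*} [CommSemiring R]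
    [DecidableEq n] {P : Matrix m n R} (hP : Pᵀ * P = 1) :
    ∑ i, ∑ j, P i j ^ 2 = Fintype.card n := by
  have h := congrArg trace hP
  rw [trace_one] at h
  rw [Finset.sum_comm, ← h]
  simp only [trace, diag, mul_apply, transpose_apply, sq]

theorem sum_sq_le_one_of_transpose_mul_self [Fintype n] [DecidableEq n] {P : Matrix m n ℝ}
    (hP : Pᵀ * P = 1) (i : m) : ∑ j, P i j ^ 2 ≤ 1 := by
  set B := P * Pᵀ
  have hidem : B * B = B := by
    simp only [B, Matrix.mul_assoc, ← Matrix.mul_assoc Pᵀ, hP, Matrix.one_mul]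
  have hdiag : B i i = ∑ j, P i j ^ 2 := by
    simp only [B, mul_apply, transpose_apply, sq]
  have hrow : B i i = ∑ k, B i k ^ 2 := by
    conv_lhs => rw [← hidem]
    simp only [mul_apply, sq]
    refine Finset.sum_congr rfl fun k _ => ?_
    rw [show B k i = B i k by simp only [B, mul_apply, transpose_apply, mul_comm]]
  have hsq : B i i ^ 2 ≤ B i i :=
    hrow ▸ Finset.single_le_sum (f := fun k => B i k ^ 2) (fun k _ => sq_nonneg _)
      (Finset.mem_univ i)
  rw [← hdiag]
  nlinarith [hdiag ▸ Finset.sum_nonneg fun j (_ : j ∈ Finset.univ) => sq_nonneg (P i j)]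

theorem transpose_submatrix_mul_mul_submatrix {R : Type*} [CommSemiring R]
    (M : Matrix m n R) (A : Matrix m m R) (f : l → n) :
    (M.submatrix id f)ᵀ * A * M.submatrix id f = (Mᵀ * A * M).submatrix f f := by
  rw [submatrix_mul _ _ f id f Function.bijective_id,
    submatrix_mul _ _ f id id Function.bijective_id]
  rfl

theorem sum_castLE_le_trace_transpose_mul_diagonal_mul {S K : ℕ} (hK : K ≤ S)
    {d : Fin S → ℝ} (hd : Monotone d) {P : Matrix (Fin S) (Fin K) ℝ} (hP : Pᵀ * P = 1) :
    ∑ i : Fin K, d (Fin.castLE hK i) ≤ (Pᵀ * diagonal d * P).trace := by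
  set s := Finset.univ.map (Fin.castLEEmb hK)
  have hlow : ∀ i ∈ s, ∀ j ∉ s, d i ≤ d j := by
    simp only [s, Finset.mem_map, Finset.mem_univ, true_and, not_exists, Fin.castLEEmb_apply]
    rintro _ ⟨a, rfl⟩ j hj
    exact hd (Fin.castLE_le_of_forall_ne hK hj)
  rw [trace_transpose_mul_diagonal_mul]
  simpa [s, Finset.sum_map] using sum_le_sum_mul_of_sum_eq_card hlow
    (fun i => Finset.sum_nonneg fun j _ => sq_nonneg (P i j))
    (sum_sq_le_one_of_transpose_mul_self hP)
    (by simpa [s] using sum_sum_sq_eq_card_of_transpose_mul_self hP)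

end Matrix

theorem stmt_7_general (S K : ℕ) (hK : K ≤ S)
    (A E : Matrix (Fin S) (Fin S) ℝ)
    (d : Fin S → ℝ) (hd : Monotone d)
    (hE : Eᵀ * E = 1)
    (hdec : A = E * Matrix.diagonal d * Eᵀ)
    (Qstar : Matrix (Fin S) (Fin K) ℝ)
    (hQstar : Qstar = fun i j => E i (Fin.castLE hK j)) :
    Qstarᵀ * Qstar = 1 ∧
    (∀ Q : Matrix (Fin S) (Fin K) ℝ, Qᵀ * Q = 1 →
      (Qstarᵀ * A * Qstar).trace ≤ (Qᵀ * A * Q).trace) ∧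
    (Qstarᵀ * A * Qstar).trace = ∑ i : Fin K, d (Fin.castLE hK i) := by
  have hE' : E * Eᵀ = 1 := mul_eq_one_comm.mp hE
  replace hQstar : Qstar = E.submatrix id (Fin.castLE hK) := hQstar
  have hEAE : Eᵀ * A * E = diagonal d := by
    rw [hdec, Matrix.mul_assoc, Matrix.mul_assoc, hE, Matrix.mul_one, ← Matrix.mul_assoc, hE,
      Matrix.one_mul]
  have hvalue : (Qstarᵀ * A * Qstar).trace = ∑ i : Fin K, d (Fin.castLE hK i) := by
    rw [hQstar, transpose_submatrix_mul_mul_submatrix, hEAE,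
      submatrix_diagonal _ _ (Fin.castLE_injective hK), trace_diagonal]
    rfl
  refine ⟨?_, fun Q hQ => ?_, hvalue⟩
  · have h := transpose_submatrix_mul_mul_submatrix E 1 (Fin.castLE hK)
    rwa [Matrix.mul_one, Matrix.mul_one, hE, submatrix_one _ (Fin.castLE_injective hK),
      ← hQstar] at h
  · have hP : (Eᵀ * Q)ᵀ * (Eᵀ * Q) = 1 := by
      rw [transpose_mul, transpose_transpose, Matrix.mul_assoc, ← Matrix.mul_assoc E, hE',
        Matrix.one_mul, hQ]
    have hconj : Qᵀ * A * Q = (Eᵀ * Q)ᵀ * diagonal d * (Eᵀ * Q) := by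
      simp only [hdec, transpose_mul, transpose_transpose, Matrix.mul_assoc]
    rw [hvalue, hconj]
    exact sum_castLE_le_trace_transpose_mul_diagonal_mul hK hd hP

/-- For symmetric `A = E Λ Eᵀ` with `E` orthogonal and ascending eigenvalues `d`,
the first `K` columns of `E` minimize `Q ↦ tr(QᵀAQ)` over matrices with orthonormal columns,
with minimum value the sum of the `K` smallest eigenvalues. -/
theorem stmt_7 (S K : ℕ) (hK : K ≤ S)
    (A E : Matrix (Fin S) (Fin S) ℝ) (hA : A.IsSymm)
    (d : Fin S → ℝ) (hd : Monotone d)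
    (hE : Eᵀ * E = 1) (hE' : E * Eᵀ = 1)
    (hdec : A = E * Matrix.diagonal d * Eᵀ)
    (Qstar : Matrix (Fin S) (Fin K) ℝ)
    (hQstar : Qstar = fun i j => E i (Fin.castLE hK j)) :
    Qstarᵀ * Qstar = 1 ∧
    (∀ Q : Matrix (Fin S) (Fin K) ℝ, Qᵀ * Q = 1 →
      (Qstarᵀ * A * Qstar).trace ≤ (Qᵀ * A * Q).trace) ∧
    (Qstarᵀ * A * Qstar).trace = ∑ i : Fin K, d (Fin.castLE hK i) :=
  stmt_7_general S K hK A E d hd hE hdec Qstar hQstar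
end

section
/- Suppose X_i ∈ ℝ^{V_i×T₀} has full column rank for each i = 1,…,M, with thin SVD X_i = U_i D_i^{1/2} V_iᵀ where V_i ∈ ℝ^{T₀×T₀} is orthogonal. Let P ∈ ℝ^{K×T₀} (K ≤ T₀) satisfy P Pᵀ = I_K, and set W_i* = M^{−1/2} U_i D_i^{−1/2} V_i Pᵀ (suitably scaled so that the joint constraint holds). Then (W_i*)ᵀ X_i = M^{−1/2} P is the same matrix for every i; in particular the stacked W* satisfies (W*)ᵀ X_* X_*ᵀ W* = I_K and tr((W*)ᵀ X_* L X_*ᵀ W*) = 0 for the aligned-graph Laplacian L = I − G_HA, so this W* achieves perfect alignment of all aligning samples. -/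
open Matrix BigOperators

/-- If each `Xᵢ ∈ ℝ^{Vᵢ×T₀}` has full column rank with thin SVD
`Xᵢ = Uᵢ Dᵢ^{1/2} Vᵢᵀ` (`Vᵢ` orthogonal `T₀×T₀`), `P ∈ ℝ^{K×T₀}` with `PPᵀ = I`, and
`Wᵢ* = M^{-1/2} Uᵢ Dᵢ^{-1/2} Vᵢᵀ Pᵀ` (scaled so the joint constraint holds), then
`(Wᵢ*)ᵀ Xᵢ = M^{-1/2} P` for every `i`; the stacked `W*` satisfies
`(W*)ᵀ X_* X_*ᵀ W* = I` and `tr((W*)ᵀ X_* L X_*ᵀ W*) = 0` for `L = I − G_HA`: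
perfect alignment of all aligning samples. -/
theorem stmt_17 (M T₀ K : ℕ) (hK : K ≤ T₀) (Vdim : Fin M → ℕ)
    (X : ∀ i : Fin M, Matrix (Fin (Vdim i)) (Fin T₀) ℝ)
    (U : ∀ i : Fin M, Matrix (Fin (Vdim i)) (Fin T₀) ℝ)
    (Vm : Fin M → Matrix (Fin T₀) (Fin T₀) ℝ)
    (d : Fin M → Fin T₀ → ℝ) (hd : ∀ i t, 0 < d i t)
    (hU : ∀ i, (U i)ᵀ * U i = 1)
    (hV : ∀ i, (Vm i)ᵀ * Vm i = 1) (hV' : ∀ i, Vm i * (Vm i)ᵀ = 1)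
    (hSVD : ∀ i, X i = U i * Matrix.diagonal (fun t => Real.sqrt (d i t)) * (Vm i)ᵀ)
    (P : Matrix (Fin K) (Fin T₀) ℝ) (hP : P * Pᵀ = 1)
    (Wstar : ∀ i : Fin M, Matrix (Fin (Vdim i)) (Fin K) ℝ)
    (hWstar : ∀ i, Wstar i
      = (Real.sqrt M)⁻¹ • (U i * Matrix.diagonal (fun t => (Real.sqrt (d i t))⁻¹)
          * (Vm i)ᵀ * Pᵀ))
    (Xstar : Matrix (Σ i : Fin M, Fin (Vdim i)) (Σ _ : Fin M, Fin T₀) ℝ)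
    (hX : Xstar = Matrix.blockDiagonal' X)
    (Wstack : Matrix (Σ i : Fin M, Fin (Vdim i)) (Fin K) ℝ)
    (hW : ∀ (i : Fin M) (v : Fin (Vdim i)) (k : Fin K), Wstack ⟨i, v⟩ k = Wstar i v k)
    (GHA L : Matrix (Σ _ : Fin M, Fin T₀) (Σ _ : Fin M, Fin T₀) ℝ)
    (hG : ∀ (i j : Fin M) (t s : Fin T₀),
      GHA ⟨i, t⟩ ⟨j, s⟩ = if t = s then (M : ℝ)⁻¹ else 0)
    (hL : L = 1 - GHA)
    (hM : 0 < M) :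
    (∀ i : Fin M, (Wstar i)ᵀ * X i = (Real.sqrt M)⁻¹ • P) ∧
    Wstackᵀ * Xstar * Xstarᵀ * Wstack = 1 ∧
    (Wstackᵀ * Xstar * L * Xstarᵀ * Wstack).trace = 0 := by
  have hMpos : (0:ℝ) < M := by exact_mod_cast hM
  have hsqrtM : (0:ℝ) < Real.sqrt M := Real.sqrt_pos.mpr hMpos
  have hsq : (Real.sqrt M)⁻¹ * (Real.sqrt M)⁻¹ = (M:ℝ)⁻¹ := by
    rw [← mul_inv, Real.mul_self_sqrt hMpos.le]
  have hpart1 : ∀ i : Fin M, (Wstar i)ᵀ * X i = (Real.sqrt M)⁻¹ • P := by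
    intro i
    have hdiag : (Matrix.diagonal fun t => (Real.sqrt (d i t))⁻¹)
        * (Matrix.diagonal fun t => Real.sqrt (d i t)) = (1 : Matrix (Fin T₀) (Fin T₀) ℝ) := by
      rw [Matrix.diagonal_mul_diagonal]
      convert Matrix.diagonal_one using 2
      funext t
      exact inv_mul_cancel₀ (ne_of_gt (Real.sqrt_pos.mpr (hd i t)))
    rw [hWstar, hSVD, Matrix.transpose_smul, Matrix.smul_mul]
    congr 1
    simp only [Matrix.transpose_mul, Matrix.transpose_transpose, Matrix.diagonal_transpose,
      ← Matrix.mul_assoc]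
    rw [Matrix.mul_assoc _ (U i)ᵀ (U i), hU i, Matrix.mul_one,
      Matrix.mul_assoc _ (Matrix.diagonal fun t => (Real.sqrt (d i t))⁻¹) _, hdiag,
      Matrix.mul_one, Matrix.mul_assoc, hV' i, Matrix.mul_one]
  set A : Matrix (Fin K) (Σ _ : Fin M, Fin T₀) ℝ := Wstackᵀ * Xstar with hA
  have hAentry : ∀ (k : Fin K) (j : Fin M) (s : Fin T₀),
      A k ⟨j, s⟩ = (Real.sqrt M)⁻¹ * P k s := by
    intro k j s
    rw [hA, Matrix.mul_apply, ← Finset.univ_sigma_univ, Finset.sum_sigma]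
    rw [Finset.sum_eq_single j]
    · have h1 : ∀ v : Fin (Vdim j), Xstar ⟨j, v⟩ ⟨j, s⟩ = X j v s := by
        intro v
        rw [hX]
        exact Matrix.blockDiagonal'_apply_eq X j v s
      have : ∀ v : Fin (Vdim j),
          Wstackᵀ k ⟨j, v⟩ * Xstar ⟨j, v⟩ ⟨j, s⟩ = (Wstar j)ᵀ k v * X j v s := by
        intro v
        rw [h1, Matrix.transpose_apply, Matrix.transpose_apply, hW]
      rw [Finset.sum_congr rfl fun v _ => this v, ← Matrix.mul_apply, hpart1 j]
      simp [Matrix.smul_apply]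
    · intro i _ hij
      apply Finset.sum_eq_zero
      intro v _
      have : Xstar ⟨i, v⟩ ⟨j, s⟩ = 0 := by
        rw [hX]; exact Matrix.blockDiagonal'_apply_ne X v s hij
      rw [this, mul_zero]
    · intro h; exact absurd (Finset.mem_univ j) h
  have hAAt : A * Aᵀ = 1 := by
    ext k k'
    rw [Matrix.mul_apply, ← Finset.univ_sigma_univ, Finset.sum_sigma]
    have : ∀ j : Fin M, ∑ s : Fin T₀, A k ⟨j, s⟩ * Aᵀ ⟨j, s⟩ k' = (M:ℝ)⁻¹ * (P * Pᵀ) k k' := by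
      intro j
      rw [Matrix.mul_apply, Finset.mul_sum]
      refine Finset.sum_congr rfl fun s _ => ?_
      simp only [Matrix.transpose_apply]
      rw [hAentry, hAentry, mul_mul_mul_comm, hsq]
    rw [Finset.sum_congr rfl fun j _ => this j, Finset.sum_const, Finset.card_univ,
      Fintype.card_fin, nsmul_eq_mul, hP, ← mul_assoc, mul_inv_cancel₀ (ne_of_gt hMpos), one_mul]
  have hAG : A * GHA = A := by
    ext k x
    obtain ⟨j, s⟩ := x
    rw [Matrix.mul_apply, ← Finset.univ_sigma_univ, Finset.sum_sigma]
    have : ∀ i : Fin M, ∑ t : Fin T₀, A k ⟨i, t⟩ * GHA ⟨i, t⟩ ⟨j, s⟩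
        = (Real.sqrt M)⁻¹ * P k s * (M:ℝ)⁻¹ := by
      intro i
      have : ∀ t : Fin T₀, A k ⟨i, t⟩ * GHA ⟨i, t⟩ ⟨j, s⟩
          = if t = s then (Real.sqrt M)⁻¹ * P k t * (M:ℝ)⁻¹ else 0 := by
        intro t
        rw [hAentry, hG]
        split <;> simp
      rw [Finset.sum_congr rfl fun t _ => this t, Finset.sum_ite_eq' Finset.univ s,
        if_pos (Finset.mem_univ s)]
    rw [Finset.sum_congr rfl fun i _ => this i, Finset.sum_const, Finset.card_univ,
      Fintype.card_fin, nsmul_eq_mul, hAentry]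
    field_simp
  have hAL : A * L = 0 := by
    rw [hL, Matrix.mul_sub, Matrix.mul_one, hAG, sub_self]
  refine ⟨hpart1, ?_, ?_⟩
  · calc Wstackᵀ * Xstar * Xstarᵀ * Wstack = A * Aᵀ := by
          rw [hA, Matrix.transpose_mul, Matrix.transpose_transpose, Matrix.mul_assoc]
      _ = 1 := hAAt
  · have : Wstackᵀ * Xstar * L * Xstarᵀ * Wstack = (A * L) * Aᵀ := by
      rw [hA, Matrix.transpose_mul, Matrix.transpose_transpose, Matrix.mul_assoc (A * L)]
    rw [this, hAL, Matrix.zero_mul, Matrix.trace_zero]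
end
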